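/- Let $n \ge 4$, $0 < \mu \le 4$, $\mu < n$, and $p = \frac{2n-\mu}{n-2}$. For $i$ fixed, set $\tau(z) = (1+|z|^2)^{1/2}$ and $z_i = \lambda_i(x - \xi_i)$. Then there is a constant $C = C(n,\mu)$ such that for all $x \in \mathbb{R}^n$: $\int_{\mathbb{R}^n} |x - y|^{-\mu}\, \frac{\lambda_i^{n - \mu/2}}{\tau(\lambda_i(y-\xi_i))^{2n-\mu}}\, dy \le C \frac{\lambda_i^{\mu/2}}{\tau(z_i)^\mu}$. -/

import Mathlib

open Real MeasureTheory Metric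
open scoped ENNReal NNReal

variable {n : ℕ}

lemma ball_riesz (hn : 1 ≤ n) {μ : ℝ} (hμ0 : 0 < μ) (hμn : μ < n) :
    ∃ D : ℝ≥0∞, D ≠ ⊤ ∧ ∀ (w : EuclideanSpace ℝ (Fin n)) (r : ℝ), 0 < r →
      ∫⁻ z in ball w r, ENNReal.ofReal (‖w - z‖ ^ (-μ)) ≤
        D * ENNReal.ofReal (r ^ ((n : ℝ) - μ)) := by
  haveI : Nonempty (Fin n) := ⟨⟨0, hn⟩⟩
  haveI : Nontrivial (EuclideanSpace ℝ (Fin n)) := inferInstance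
  set V : ℝ≥0∞ := volume (ball (0 : EuclideanSpace ℝ (Fin n)) 1) with hV
  have hnμ : 0 < (n : ℝ) - μ := sub_pos.2 hμn
  set q : ℝ := (2⁻¹ : ℝ) ^ ((n : ℝ) - μ) with hq
  have hq0 : 0 ≤ q := rpow_nonneg (by norm_num) _
  have hq1 : q < 1 := rpow_lt_one (by norm_num) (by norm_num) hnμ
  have hq1' : ENNReal.ofReal q < 1 := by
    rw [← ENNReal.ofReal_one]; exact ENNReal.ofReal_lt_ofReal_iff_of_nonneg hq0 |>.2 hq1
  refine ⟨ENNReal.ofReal (2 ^ μ) * V * (1 - ENNReal.ofReal q)⁻¹, ?_, ?_⟩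
  · refine ENNReal.mul_ne_top (ENNReal.mul_ne_top ENNReal.ofReal_ne_top
      measure_ball_lt_top.ne) ?_
    rw [ENNReal.inv_ne_top]
    exact (tsub_pos_iff_lt.2 hq1').ne'
  intro w r hr
  -- translate to the origin
  have h1 : ∫⁻ z in ball w r, ENNReal.ofReal (‖w - z‖ ^ (-μ)) =
      ∫⁻ z in ball (0 : EuclideanSpace ℝ (Fin n)) r, ENNReal.ofReal (‖z‖ ^ (-μ)) := by
    rw [← lintegral_indicator measurableSet_ball, ← lintegral_indicator measurableSet_ball]
    have hpt : ∀ z : EuclideanSpace ℝ (Fin n),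
        (ball w r).indicator (fun z => ENNReal.ofReal (‖w - z‖ ^ (-μ))) z =
        (ball (0 : EuclideanSpace ℝ (Fin n)) r).indicator
          (fun u => ENNReal.ofReal (‖u‖ ^ (-μ))) (z - w) := by
      intro z
      simp only [Set.indicator, mem_ball, dist_eq_norm, mem_ball_zero_iff, sub_zero,
        norm_sub_rev z w]
    simp_rw [hpt]
    exact lintegral_sub_right_eq_self
      ((ball (0 : EuclideanSpace ℝ (Fin n)) r).indicator fun u => ENNReal.ofReal (‖u‖ ^ (-μ))) w
  rw [h1]
  -- dyadic shells
  set ρ : ℕ → ℝ := fun k => r * (2⁻¹ : ℝ) ^ k with hρ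
  have hρpos : ∀ k, 0 < ρ k := fun k => mul_pos hr (pow_pos (by norm_num) k)
  have hρsucc : ∀ k, ρ (k + 1) = ρ k * 2⁻¹ := by
    intro k; simp only [hρ, pow_succ]; ring
  set A : ℕ → Set (EuclideanSpace ℝ (Fin n)) :=
    fun k => ball (0 : EuclideanSpace ℝ (Fin n)) (ρ k) \ ball 0 (ρ (k + 1)) with hA
  have hcover : ball (0 : EuclideanSpace ℝ (Fin n)) r \ {0} ⊆ ⋃ k, A k := by
    intro z hz
    obtain ⟨hzr, hz0⟩ := hz
    rw [mem_ball_zero_iff] at hzr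
    have h0 : 0 < ‖z‖ := norm_pos_iff.2 (by simpa using hz0)
    have hex : ∃ k, ρ (k + 1) ≤ ‖z‖ := by
      obtain ⟨m, hm⟩ := exists_pow_lt_of_lt_one (div_pos h0 hr) (by norm_num : (2⁻¹ : ℝ) < 1)
      refine ⟨m, ?_⟩
      have hm' : ρ m < ‖z‖ := by
        rw [hρ]
        calc r * (2⁻¹:ℝ) ^ m < r * (‖z‖ / r) := by
              exact mul_lt_mul_of_pos_left hm hr
          _ = ‖z‖ := by field_simp
      have : ρ (m + 1) ≤ ρ m := by
        rw [hρsucc m]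
        nlinarith [hρpos m]
      linarith
    refine Set.mem_iUnion.2 ⟨Nat.find hex, ?_, ?_⟩
    · rw [mem_ball_zero_iff]
      rcases Nat.eq_zero_or_pos (Nat.find hex) with h | h
      · rw [h]; simpa [hρ] using hzr
      · have hmin := Nat.find_min hex (Nat.sub_lt h one_pos)
        rw [← Nat.succ_pred_eq_of_pos h]
        push_neg at hmin
        exact hmin
    · intro hmem
      rw [mem_ball_zero_iff] at hmem
      exact absurd (Nat.find_spec hex) (not_le.2 hmem)
  -- ignore the origin (null set)
  have hset : (ball (0 : EuclideanSpace ℝ (Fin n)) r \ {0} : Set _) =ᵐ[volume]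
      (ball (0 : EuclideanSpace ℝ (Fin n)) r : Set _) := by
    refine diff_ae_eq_self.2 ?_
    exact measure_mono_null Set.inter_subset_right (measure_singleton 0)
  rw [← setLIntegral_congr hset]
  -- real-number key identity
  have hkey : ∀ k : ℕ, ρ (k + 1) ^ (-μ) * ρ k ^ n = q ^ k * (2 ^ μ * r ^ ((n : ℝ) - μ)) := by
    intro k
    have hρk := hρpos k
    have h2 : ((2:ℝ)⁻¹) ^ (-μ) = 2 ^ μ := by
      rw [Real.inv_rpow (by norm_num), Real.rpow_neg (by norm_num), inv_inv]
    have hd : ρ k ^ ((n : ℝ) - μ) = r ^ ((n : ℝ) - μ) * q ^ k := by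
      rw [hρ]
      rw [Real.mul_rpow hr.le (by positivity)]
      congr 1
      rw [← Real.rpow_natCast (2⁻¹ : ℝ) k, ← Real.rpow_mul (by norm_num),
        mul_comm (k : ℝ), Real.rpow_mul (by norm_num), Real.rpow_natCast]
    calc ρ (k + 1) ^ (-μ) * ρ k ^ n
        = (ρ k) ^ (-μ) * ((2:ℝ)⁻¹) ^ (-μ) * ρ k ^ ((n:ℕ) : ℝ) := by
          rw [hρsucc k, Real.mul_rpow hρk.le (by norm_num), Real.rpow_natCast]
      _ = 2 ^ μ * (ρ k ^ (-μ) * ρ k ^ ((n:ℕ) : ℝ)) := by rw [h2]; ring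
      _ = 2 ^ μ * ρ k ^ ((n : ℝ) - μ) := by
          rw [← Real.rpow_add hρk]; congr 2; push_cast; ring
      _ = q ^ k * (2 ^ μ * r ^ ((n : ℝ) - μ)) := by rw [hd]; ring
  -- bound each shell
  have hterm : ∀ k : ℕ, ∫⁻ z in A k, ENNReal.ofReal (‖z‖ ^ (-μ)) ≤
      ENNReal.ofReal q ^ k * (ENNReal.ofReal (2 ^ μ * r ^ ((n : ℝ) - μ)) * V) := by
    intro k
    have hb : ∫⁻ z in A k, ENNReal.ofReal (‖z‖ ^ (-μ)) ≤
        ∫⁻ _ in A k, ENNReal.ofReal (ρ (k + 1) ^ (-μ)) := by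
      refine setLIntegral_mono' (measurableSet_ball.diff measurableSet_ball) ?_
      intro z hz
      have h1 : ρ (k + 1) ≤ ‖z‖ := by
        have h2 := hz.2
        simp only [mem_ball_zero_iff, not_lt] at h2
        exact h2
      exact ENNReal.ofReal_le_ofReal
        (rpow_le_rpow_of_nonpos (hρpos _) h1 (neg_nonpos.2 hμ0.le))
    rw [setLIntegral_const] at hb
    have hvol : volume (A k) ≤ ENNReal.ofReal (ρ k ^ n) * V := by
      refine le_trans (measure_mono Set.diff_subset) ?_
      rw [Measure.addHaar_ball volume _ (hρpos k).le, finrank_euclideanSpace_fin]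
    calc ∫⁻ z in A k, ENNReal.ofReal (‖z‖ ^ (-μ))
        ≤ ENNReal.ofReal (ρ (k + 1) ^ (-μ)) * (ENNReal.ofReal (ρ k ^ n) * V) := by
          refine hb.trans ?_
          exact mul_le_mul_right hvol _
      _ = ENNReal.ofReal (ρ (k + 1) ^ (-μ) * ρ k ^ n) * V := by
          rw [ENNReal.ofReal_mul (by positivity), mul_assoc]
      _ = ENNReal.ofReal (q ^ k * (2 ^ μ * r ^ ((n : ℝ) - μ))) * V := by rw [hkey k]
      _ = ENNReal.ofReal q ^ k * (ENNReal.ofReal (2 ^ μ * r ^ ((n : ℝ) - μ)) * V) := by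
          rw [ENNReal.ofReal_mul (by positivity), ENNReal.ofReal_pow hq0, mul_assoc]
  calc ∫⁻ z in ball (0 : EuclideanSpace ℝ (Fin n)) r \ {0}, ENNReal.ofReal (‖z‖ ^ (-μ))
      ≤ ∫⁻ z in ⋃ k, A k, ENNReal.ofReal (‖z‖ ^ (-μ)) := lintegral_mono_set hcover
    _ ≤ ∑' k, ∫⁻ z in A k, ENNReal.ofReal (‖z‖ ^ (-μ)) := lintegral_iUnion_le _ _
    _ ≤ ∑' k : ℕ, ENNReal.ofReal q ^ k * (ENNReal.ofReal (2 ^ μ * r ^ ((n : ℝ) - μ)) * V) :=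
        ENNReal.tsum_le_tsum hterm
    _ = (1 - ENNReal.ofReal q)⁻¹ * (ENNReal.ofReal (2 ^ μ * r ^ ((n : ℝ) - μ)) * V) := by
        rw [ENNReal.tsum_mul_right, ENNReal.tsum_geometric]
    _ = ENNReal.ofReal (2 ^ μ) * V * (1 - ENNReal.ofReal q)⁻¹ *
          ENNReal.ofReal (r ^ ((n : ℝ) - μ)) := by
        rw [ENNReal.ofReal_mul (by positivity)]
        ring

lemma tail_finite (hn : 1 ≤ n) {μ : ℝ} (hμ0 : 0 < μ) (hμn : μ < n) :
    ∫⁻ z : EuclideanSpace ℝ (Fin n),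
      ENNReal.ofReal ((1 + ‖z‖ ^ 2) ^ (-((2 * (n : ℝ) - μ) / 2))) ≠ ⊤ := by
  have hfin : (Module.finrank ℝ (EuclideanSpace ℝ (Fin n)) : ℝ) < 2 * n - μ := by
    rw [finrank_euclideanSpace_fin]; push_cast; linarith
  have hint := integrable_rpow_neg_one_add_norm_sq
    (E := EuclideanSpace ℝ (Fin n)) (μ := volume) hfin
  have heq : ∀ z : EuclideanSpace ℝ (Fin n),
      ((1 : ℝ) + ‖z‖ ^ 2) ^ (-(2 * (n : ℝ) - μ) / 2) =
      ((1 : ℝ) + ‖z‖ ^ 2) ^ (-((2 * (n : ℝ) - μ) / 2)) := by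
    intro z; rw [neg_div]
  simp_rw [heq] at hint
  rw [← ofReal_integral_eq_lintegral_ofReal hint
    (Filter.Eventually.of_forall fun z => by positivity)]
  exact ENNReal.ofReal_ne_top

lemma lint_comp_smul (f : EuclideanSpace ℝ (Fin n) → ℝ≥0∞) {R : ℝ} (hR : R ≠ 0) :
    ∫⁻ x, f (R • x) = ENNReal.ofReal |(R ^ n)⁻¹| * ∫⁻ x, f x := by
  let e : EuclideanSpace ℝ (Fin n) ≃ᵐ EuclideanSpace ℝ (Fin n) :=
    (Homeomorph.smul (Units.mk0 R hR)).toMeasurableEquiv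
  have he : ∀ x, e x = R • x := fun x => rfl
  have hmap : Measure.map (fun x : EuclideanSpace ℝ (Fin n) => R • x) volume
      = ENNReal.ofReal |(R ^ Module.finrank ℝ (EuclideanSpace ℝ (Fin n)))⁻¹| • volume :=
    Measure.map_addHaar_smul volume hR
  calc ∫⁻ x, f (R • x)
      = ∫⁻ x, f (e x) := by simp_rw [he]
    _ = ∫⁻ y, f y ∂(Measure.map e volume) := (lintegral_map_equiv f e).symm
    _ = ENNReal.ofReal |(R ^ n)⁻¹| * ∫⁻ x, f x := by
        have : Measure.map e volume =
            ENNReal.ofReal |(R ^ Module.finrank ℝ (EuclideanSpace ℝ (Fin n)))⁻¹| • volume := by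
          rw [← hmap]
          congr 1
        rw [this, lintegral_smul_measure, finrank_euclideanSpace_fin, smul_eq_mul]

set_option maxHeartbeats 1000000 in
lemma lemA (hn : 1 ≤ n) {μ : ℝ} (hμ0 : 0 < μ) (hμn : μ < n) :
    ∃ C : ℝ≥0∞, C ≠ ⊤ ∧ ∀ w : EuclideanSpace ℝ (Fin n),
      ∫⁻ z : EuclideanSpace ℝ (Fin n),
          ENNReal.ofReal (‖w - z‖ ^ (-μ)) *
            ENNReal.ofReal ((1 + ‖z‖ ^ 2) ^ (-((2 * (n : ℝ) - μ) / 2)))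
        ≤ C * ENNReal.ofReal ((1 + ‖w‖ ^ 2) ^ (-(μ / 2))) := by
  obtain ⟨D, hD, hDball⟩ := ball_riesz hn hμ0 hμn
  set T : ℝ≥0∞ := ∫⁻ z : EuclideanSpace ℝ (Fin n),
      ENNReal.ofReal ((1 + ‖z‖ ^ 2) ^ (-((2 * (n : ℝ) - μ) / 2))) with hT
  have hTfin : T ≠ ⊤ := tail_finite hn hμ0 hμn
  set K : ℝ := (2 * (n : ℝ) - μ) / 2 with hK
  have hK0 : 0 ≤ K := by rw [hK]; have : μ ≤ (n:ℝ) := hμn.le; nlinarith [hμ0.le]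
  have hμ2 : 0 ≤ μ / 2 := by linarith
  refine ⟨(D + T) * ENNReal.ofReal (2 ^ (μ / 2)) + D * ENNReal.ofReal (4 ^ K)
      + T * ENNReal.ofReal (2 ^ μ * 2 ^ (μ / 2)), ?_, ?_⟩
  · refine ENNReal.add_ne_top.2 ⟨ENNReal.add_ne_top.2 ⟨?_, ?_⟩, ?_⟩
    · exact ENNReal.mul_ne_top (ENNReal.add_ne_top.2 ⟨hD, hTfin⟩) ENNReal.ofReal_ne_top
    · exact ENNReal.mul_ne_top hD ENNReal.ofReal_ne_top
    · exact ENNReal.mul_ne_top hTfin ENNReal.ofReal_ne_top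
  intro w
  set a : ℝ := 1 + ‖w‖ ^ 2 with ha
  have ha1 : (1:ℝ) ≤ a := by
    rw [ha]; exact le_add_of_nonneg_right (by positivity)
  have ha0 : (0:ℝ) < a := by linarith
  set F : EuclideanSpace ℝ (Fin n) → ℝ≥0∞ := fun z =>
    ENNReal.ofReal (‖w - z‖ ^ (-μ)) *
      ENNReal.ofReal ((1 + ‖z‖ ^ 2) ^ (-K)) with hF
  by_cases hw : ‖w‖ ≤ 1
  · -- small w
    have hp1 : ∫⁻ z in ball w 1, F z ≤ D := by
      have h1 : ∫⁻ z in ball w 1, F z ≤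
          ∫⁻ z in ball w 1, ENNReal.ofReal (‖w - z‖ ^ (-μ)) := by
        refine setLIntegral_mono' measurableSet_ball fun z _ => ?_
        refine mul_le_of_le_one_right' ?_
        refine ENNReal.ofReal_le_one.2 ?_
        exact rpow_le_one_of_one_le_of_nonpos (le_add_of_nonneg_right (by positivity))
          (by linarith)
      refine h1.trans ?_
      have := hDball w 1 one_pos
      simpa using this
    have hp2 : ∫⁻ z in (ball w 1)ᶜ, F z ≤ T := by
      have h1 : ∫⁻ z in (ball w 1)ᶜ, F z ≤
          ∫⁻ z in (ball w 1)ᶜ, ENNReal.ofReal ((1 + ‖z‖ ^ 2) ^ (-K)) := by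
        refine setLIntegral_mono' measurableSet_ball.compl fun z hz => ?_
        have hz1 : 1 ≤ ‖w - z‖ := by
          simp only [Set.mem_compl_iff, mem_ball, not_lt, dist_eq_norm] at hz
          calc (1:ℝ) ≤ ‖z - w‖ := hz
            _ = ‖w - z‖ := norm_sub_rev z w
        refine mul_le_of_le_one_left' ?_
        exact ENNReal.ofReal_le_one.2
          (rpow_le_one_of_one_le_of_nonpos hz1 (by linarith))
      exact h1.trans (setLIntegral_le_lintegral _ _)
    have hsum : ∫⁻ z, F z ≤ D + T := by
      rw [← lintegral_add_compl F (measurableSet_ball (x := w) (ε := 1))]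
      exact add_le_add hp1 hp2
    refine hsum.trans ?_
    have hkey : (1:ℝ) ≤ 2 ^ (μ / 2) * a ^ (-(μ / 2)) := by
      have ha2 : a ≤ 2 := by
        rw [ha]
        have : ‖w‖ ^ 2 ≤ 1 := by nlinarith [norm_nonneg w]
        linarith
      have h1 : a ^ (μ / 2) * a ^ (-(μ / 2)) = 1 := by
        rw [← Real.rpow_add ha0]; simp
      have h2 : a ^ (μ / 2) ≤ 2 ^ (μ / 2) := Real.rpow_le_rpow ha0.le ha2 hμ2
      nlinarith [Real.rpow_nonneg ha0.le (-(μ / 2)), Real.rpow_nonneg ha0.le (μ / 2)]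
    calc D + T = (D + T) * 1 := (mul_one _).symm
      _ ≤ (D + T) * ENNReal.ofReal (2 ^ (μ / 2) * a ^ (-(μ / 2))) := by
          exact mul_le_mul_right (ENNReal.one_le_ofReal.2 hkey) _
      _ = (D + T) * ENNReal.ofReal (2 ^ (μ / 2)) * ENNReal.ofReal (a ^ (-(μ / 2))) := by
          rw [ENNReal.ofReal_mul (by positivity), mul_assoc]
      _ ≤ ((D + T) * ENNReal.ofReal (2 ^ (μ / 2)) + D * ENNReal.ofReal (4 ^ K)
            + T * ENNReal.ofReal (2 ^ μ * 2 ^ (μ / 2))) *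
            ENNReal.ofReal (a ^ (-(μ / 2))) := by
          refine mul_le_mul_left ?_ _
          calc (D + T) * ENNReal.ofReal (2 ^ (μ / 2))
              ≤ (D + T) * ENNReal.ofReal (2 ^ (μ / 2)) + D * ENNReal.ofReal (4 ^ K) :=
                le_self_add
            _ ≤ _ := le_self_add
  · -- large w
    push_neg at hw
    have hw0 : 0 < ‖w‖ := by linarith
    have hrpos : 0 < ‖w‖ / 2 := by linarith
    have hw2 : 1 ≤ ‖w‖ ^ 2 := by nlinarith
    have h2a : a ≤ 2 * ‖w‖ ^ 2 := by rw [ha]; nlinarith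
    -- piece on the ball
    have hp1 : ∫⁻ z in ball w (‖w‖ / 2), F z ≤
        D * ENNReal.ofReal (4 ^ K) * ENNReal.ofReal (a ^ (-(μ / 2))) := by
      have hpt : ∀ z ∈ ball w (‖w‖ / 2), F z ≤
          ENNReal.ofReal (4 ^ K * a ^ (-K)) * ENNReal.ofReal (‖w - z‖ ^ (-μ)) := by
        intro z hz
        rw [mem_ball, dist_comm, dist_eq_norm] at hz
        have hz2 : ‖w‖ / 2 ≤ ‖z‖ := by
          have htri : ‖w‖ ≤ ‖w - z‖ + ‖z‖ := by
            have hww : w - z + z = w := by abel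
            calc ‖w‖ = ‖(w - z) + z‖ := by rw [hww]
              _ ≤ ‖w - z‖ + ‖z‖ := norm_add_le _ _
          linarith
        have hza : a / 4 ≤ 1 + ‖z‖ ^ 2 := by
          rw [ha]
          nlinarith [norm_nonneg z, norm_nonneg w]
        have h1 : ((1:ℝ) + ‖z‖ ^ 2) ^ (-K) ≤ (a / 4) ^ (-K) :=
          rpow_le_rpow_of_nonpos (by linarith) hza (by linarith)
        have h2 : ((a:ℝ) / 4) ^ (-K) = 4 ^ K * a ^ (-K) := by
          have h4 : (0:ℝ) < 4 ^ K := Real.rpow_pos_of_pos (by norm_num) _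
          rw [Real.rpow_neg (by positivity), Real.div_rpow ha0.le (by norm_num),
            Real.rpow_neg ha0.le]
          field_simp
        have hle : ENNReal.ofReal ((1 + ‖z‖ ^ 2) ^ (-K)) ≤
            ENNReal.ofReal (4 ^ K * a ^ (-K)) :=
          ENNReal.ofReal_le_ofReal (h2 ▸ h1)
        calc F z = ENNReal.ofReal (‖w - z‖ ^ (-μ)) *
              ENNReal.ofReal ((1 + ‖z‖ ^ 2) ^ (-K)) := by rw [hF]
          _ ≤ ENNReal.ofReal (‖w - z‖ ^ (-μ)) * ENNReal.ofReal (4 ^ K * a ^ (-K)) :=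
              mul_le_mul_right hle _
          _ = ENNReal.ofReal (4 ^ K * a ^ (-K)) * ENNReal.ofReal (‖w - z‖ ^ (-μ)) :=
              mul_comm _ _
      calc ∫⁻ z in ball w (‖w‖ / 2), F z
          ≤ ∫⁻ z in ball w (‖w‖ / 2),
              ENNReal.ofReal (4 ^ K * a ^ (-K)) * ENNReal.ofReal (‖w - z‖ ^ (-μ)) :=
            setLIntegral_mono' measurableSet_ball hpt
        _ = ENNReal.ofReal (4 ^ K * a ^ (-K)) *
              ∫⁻ z in ball w (‖w‖ / 2), ENNReal.ofReal (‖w - z‖ ^ (-μ)) :=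
            lintegral_const_mul' _ _ ENNReal.ofReal_ne_top
        _ ≤ ENNReal.ofReal (4 ^ K * a ^ (-K)) *
              (D * ENNReal.ofReal ((‖w‖ / 2) ^ ((n:ℝ) - μ))) :=
            mul_le_mul_right (hDball w _ hrpos) _
        _ ≤ D * ENNReal.ofReal (4 ^ K) * ENNReal.ofReal (a ^ (-(μ / 2))) := by
            rw [← mul_assoc, mul_comm (ENNReal.ofReal (4 ^ K * a ^ (-K))) D, mul_assoc,
              mul_assoc, ← ENNReal.ofReal_mul (by positivity),
              ← ENNReal.ofReal_mul (by positivity)]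
            refine mul_le_mul_right (ENNReal.ofReal_le_ofReal ?_) _
            -- real inequality : 4^K * a^(-K) * (‖w‖/2)^(n-μ) ≤ 4^K * a^(-(μ/2))
            have hs1 : (‖w‖ / 2) ^ ((n:ℝ) - μ) ≤ ‖w‖ ^ ((n:ℝ) - μ) :=
              Real.rpow_le_rpow (by positivity) (by linarith) (by linarith)
            have hs2 : ‖w‖ ^ ((n:ℝ) - μ) ≤ a ^ (((n:ℝ) - μ) / 2) := by
              have e1 : ‖w‖ ^ ((n:ℝ) - μ) = (‖w‖ ^ 2) ^ (((n:ℝ) - μ) / 2) := by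
                rw [← Real.rpow_natCast ‖w‖ 2, ← Real.rpow_mul (norm_nonneg w)]
                congr 1
                push_cast
                ring
              rw [e1]
              exact Real.rpow_le_rpow (by positivity) (by rw [ha]; linarith) (by linarith)
            have hs3 : a ^ (-K) * a ^ (((n:ℝ) - μ) / 2) = a ^ (-K + ((n:ℝ) - μ) / 2) :=
              (Real.rpow_add ha0 _ _).symm
            have hs4 : a ^ (-K + ((n:ℝ) - μ) / 2) ≤ a ^ (-(μ / 2)) := by
              refine Real.rpow_le_rpow_of_exponent_le ha1 ?_
              rw [hK]; linarith
            calc 4 ^ K * a ^ (-K) * (‖w‖ / 2) ^ ((n:ℝ) - μ)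
                ≤ 4 ^ K * a ^ (-K) * a ^ (((n:ℝ) - μ) / 2) := by
                  refine mul_le_mul_of_nonneg_left (hs1.trans hs2) (by positivity)
              _ = 4 ^ K * a ^ (-K + ((n:ℝ) - μ) / 2) := by rw [mul_assoc, hs3]
              _ ≤ 4 ^ K * a ^ (-(μ / 2)) := by
                  refine mul_le_mul_of_nonneg_left hs4 (by positivity)
    -- piece off the ball
    have hp2 : ∫⁻ z in (ball w (‖w‖ / 2))ᶜ, F z ≤
        T * ENNReal.ofReal (2 ^ μ * 2 ^ (μ / 2)) * ENNReal.ofReal (a ^ (-(μ / 2))) := by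
      have hreal : (‖w‖ / 2) ^ (-μ) ≤ 2 ^ μ * 2 ^ (μ / 2) * a ^ (-(μ / 2)) := by
        have e1 : (‖w‖ / 2) ^ (-μ) = ‖w‖ ^ (-μ) * 2 ^ μ := by
          have h2 : (0:ℝ) < 2 ^ μ := Real.rpow_pos_of_pos (by norm_num) _
          have hwμ : (0:ℝ) < ‖w‖ ^ μ := Real.rpow_pos_of_pos hw0 _
          rw [Real.rpow_neg (by positivity), Real.div_rpow (norm_nonneg w) (by norm_num),
            Real.rpow_neg (norm_nonneg w)]
          field_simp
        have e2 : ‖w‖ ^ (-μ) = (‖w‖ ^ 2) ^ (-(μ / 2)) := by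
          rw [← Real.rpow_natCast ‖w‖ 2, ← Real.rpow_mul (norm_nonneg w)]
          congr 1
          push_cast
          ring
        have e3 : (‖w‖ ^ 2 : ℝ) ^ (-(μ / 2)) ≤ (a / 2) ^ (-(μ / 2)) := by
          refine rpow_le_rpow_of_nonpos (by linarith) (by linarith) (by linarith)
        have e4 : ((a:ℝ) / 2) ^ (-(μ / 2)) = 2 ^ (μ / 2) * a ^ (-(μ / 2)) := by
          have h2 : (0:ℝ) < 2 ^ (μ / 2) := Real.rpow_pos_of_pos (by norm_num) _
          have haμ : (0:ℝ) < a ^ (μ / 2) := Real.rpow_pos_of_pos ha0 _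
          rw [Real.rpow_neg (by positivity), Real.div_rpow ha0.le (by norm_num),
            Real.rpow_neg ha0.le]
          field_simp
        calc (‖w‖ / 2) ^ (-μ) = ‖w‖ ^ (-μ) * 2 ^ μ := e1
          _ = (‖w‖ ^ 2) ^ (-(μ / 2)) * 2 ^ μ := by rw [e2]
          _ ≤ (a / 2) ^ (-(μ / 2)) * 2 ^ μ := by
              refine mul_le_mul_of_nonneg_right e3 (by positivity)
          _ = 2 ^ μ * 2 ^ (μ / 2) * a ^ (-(μ / 2)) := by rw [e4]; ring
      have hpt : ∀ z ∈ (ball w (‖w‖ / 2))ᶜ, F z ≤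
          ENNReal.ofReal ((‖w‖ / 2) ^ (-μ)) *
            ENNReal.ofReal ((1 + ‖z‖ ^ 2) ^ (-K)) := by
        intro z hz
        have hz1 : ‖w‖ / 2 ≤ ‖w - z‖ := by
          simp only [Set.mem_compl_iff, mem_ball, not_lt, dist_eq_norm] at hz
          calc ‖w‖ / 2 ≤ ‖z - w‖ := hz
            _ = ‖w - z‖ := norm_sub_rev z w
        refine mul_le_mul_left (ENNReal.ofReal_le_ofReal ?_) _
        exact rpow_le_rpow_of_nonpos hrpos hz1 (by linarith)
      calc ∫⁻ z in (ball w (‖w‖ / 2))ᶜ, F z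
          ≤ ∫⁻ z in (ball w (‖w‖ / 2))ᶜ,
              ENNReal.ofReal ((‖w‖ / 2) ^ (-μ)) *
                ENNReal.ofReal ((1 + ‖z‖ ^ 2) ^ (-K)) :=
            setLIntegral_mono' measurableSet_ball.compl hpt
        _ = ENNReal.ofReal ((‖w‖ / 2) ^ (-μ)) *
              ∫⁻ z in (ball w (‖w‖ / 2))ᶜ, ENNReal.ofReal ((1 + ‖z‖ ^ 2) ^ (-K)) :=
            lintegral_const_mul' _ _ ENNReal.ofReal_ne_top
        _ ≤ ENNReal.ofReal ((‖w‖ / 2) ^ (-μ)) * T :=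
            mul_le_mul_right (setLIntegral_le_lintegral _ _) _
        _ ≤ ENNReal.ofReal (2 ^ μ * 2 ^ (μ / 2) * a ^ (-(μ / 2))) * T :=
            mul_le_mul_left (ENNReal.ofReal_le_ofReal hreal) _
        _ = T * ENNReal.ofReal (2 ^ μ * 2 ^ (μ / 2)) * ENNReal.ofReal (a ^ (-(μ / 2))) := by
            rw [ENNReal.ofReal_mul (by positivity)]
            ring
    have hsum : ∫⁻ z, F z ≤
        (D * ENNReal.ofReal (4 ^ K) + T * ENNReal.ofReal (2 ^ μ * 2 ^ (μ / 2))) *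
          ENNReal.ofReal (a ^ (-(μ / 2))) := by
      rw [← lintegral_add_compl F (measurableSet_ball (x := w) (ε := ‖w‖ / 2)), add_mul]
      exact add_le_add hp1 hp2
    refine hsum.trans ?_
    refine mul_le_mul_left ?_ _
    calc D * ENNReal.ofReal (4 ^ K) + T * ENNReal.ofReal (2 ^ μ * 2 ^ (μ / 2))
        ≤ (D + T) * ENNReal.ofReal (2 ^ (μ / 2)) +
            (D * ENNReal.ofReal (4 ^ K) + T * ENNReal.ofReal (2 ^ μ * 2 ^ (μ / 2))) :=
          le_add_self
      _ = _ := by ring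

set_option maxHeartbeats 1000000 in
theorem stmt11 (n : ℕ) (hn : 4 ≤ n) (μ : ℝ) (hμ0 : 0 < μ) (hμ4 : μ ≤ 4)
    (hμn : μ < (n : ℝ)) :
    ∃ C : ℝ, 0 < C ∧
      ∀ (lam : ℝ) (ξ x : EuclideanSpace ℝ (Fin n)), 0 < lam →
        (∫ y : EuclideanSpace ℝ (Fin n),
            ‖x - y‖ ^ (-μ) *
              (lam ^ ((n : ℝ) - μ / 2) /
                (1 + lam ^ 2 * ‖y - ξ‖ ^ 2) ^ ((2 * (n : ℝ) - μ) / 2)))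
          ≤ C * (lam ^ (μ / 2) / (1 + lam ^ 2 * ‖x - ξ‖ ^ 2) ^ (μ / 2)) := by
  obtain ⟨C0, hC0top, hC0⟩ := lemA (n := n) (by omega) hμ0 hμn
  refine ⟨C0.toReal + 1, by positivity, ?_⟩
  intro lam ξ x hlam
  set K : ℝ := (2 * (n : ℝ) - μ) / 2 with hK
  set f : EuclideanSpace ℝ (Fin n) → ℝ := fun y =>
    ‖x - y‖ ^ (-μ) *
      (lam ^ ((n : ℝ) - μ / 2) / (1 + lam ^ 2 * ‖y - ξ‖ ^ 2) ^ K) with hf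
  have hf0 : ∀ y, 0 ≤ f y := fun y => by
    rw [hf]
    positivity
  have hfm : AEStronglyMeasurable f volume := by
    rw [hf]
    apply Measurable.aestronglyMeasurable
    fun_prop
  rw [integral_eq_lintegral_of_nonneg_ae (Filter.Eventually.of_forall hf0) hfm]
  set w : EuclideanSpace ℝ (Fin n) := lam • (x - ξ) with hw
  have hw2 : ‖w‖ ^ 2 = lam ^ 2 * ‖x - ξ‖ ^ 2 := by
    rw [hw, norm_smul, Real.norm_eq_abs, abs_of_pos hlam, mul_pow]
  -- pointwise identity after rescaling
  have hpt : ∀ z : EuclideanSpace ℝ (Fin n),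
      ENNReal.ofReal (f (ξ + lam⁻¹ • z)) =
        ENNReal.ofReal (lam ^ ((n : ℝ) + μ / 2)) *
          (ENNReal.ofReal (‖w - z‖ ^ (-μ)) *
            ENNReal.ofReal ((1 + ‖z‖ ^ 2) ^ (-K))) := by
    intro z
    have hnorm : ‖x - (ξ + lam⁻¹ • z)‖ = lam⁻¹ * ‖w - z‖ := by
      have hxz : x - (ξ + lam⁻¹ • z) = lam⁻¹ • (w - z) := by
        calc x - (ξ + lam⁻¹ • z) = (x - ξ) - lam⁻¹ • z := by abel
          _ = lam⁻¹ • (lam • (x - ξ)) - lam⁻¹ • z := by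
              rw [smul_smul, inv_mul_cancel₀ hlam.ne', one_smul]
          _ = lam⁻¹ • (w - z) := by
              conv_rhs => rw [hw, smul_sub]
      rw [hxz, norm_smul, Real.norm_eq_abs, abs_of_pos (inv_pos.2 hlam)]
    have hnsq : 1 + lam ^ 2 * ‖(ξ + lam⁻¹ • z) - ξ‖ ^ 2 = 1 + ‖z‖ ^ 2 := by
      have h1 : (ξ + lam⁻¹ • z) - ξ = lam⁻¹ • z := by abel
      rw [h1, norm_smul, Real.norm_eq_abs, abs_of_pos (inv_pos.2 hlam), mul_pow]
      field_simp
    have hreal : f (ξ + lam⁻¹ • z) =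
        lam ^ ((n : ℝ) + μ / 2) * (‖w - z‖ ^ (-μ) * (1 + ‖z‖ ^ 2) ^ (-K)) := by
      rw [hf]
      simp only
      rw [hnorm, hnsq]
      have e1 : (lam⁻¹ * ‖w - z‖) ^ (-μ) = lam ^ μ * ‖w - z‖ ^ (-μ) := by
        rw [Real.mul_rpow (by positivity) (norm_nonneg _), Real.inv_rpow hlam.le,
          Real.rpow_neg hlam.le, inv_inv]
      have e2 : lam ^ ((n : ℝ) - μ / 2) / (1 + ‖z‖ ^ 2) ^ K =
          lam ^ ((n : ℝ) - μ / 2) * (1 + ‖z‖ ^ 2) ^ (-K) := by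
        rw [Real.rpow_neg (by positivity), div_eq_mul_inv]
      rw [e1, e2]
      have e3 : lam ^ μ * lam ^ ((n : ℝ) - μ / 2) = lam ^ ((n : ℝ) + μ / 2) := by
        rw [← Real.rpow_add hlam]
        congr 1
        ring
      calc lam ^ μ * ‖w - z‖ ^ (-μ) *
            (lam ^ ((n : ℝ) - μ / 2) * (1 + ‖z‖ ^ 2) ^ (-K))
          = (lam ^ μ * lam ^ ((n : ℝ) - μ / 2)) *
              (‖w - z‖ ^ (-μ) * (1 + ‖z‖ ^ 2) ^ (-K)) := by ring
        _ = lam ^ ((n : ℝ) + μ / 2) * (‖w - z‖ ^ (-μ) * (1 + ‖z‖ ^ 2) ^ (-K)) := by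
            rw [e3]
    rw [hreal, ENNReal.ofReal_mul (by positivity), ENNReal.ofReal_mul (by positivity)]
  -- rescale the integral
  have hscale : ∫⁻ z, ENNReal.ofReal (f (ξ + lam⁻¹ • z)) =
      ENNReal.ofReal (lam ^ n) * ∫⁻ y, ENNReal.ofReal (f y) := by
    have h1 := lint_comp_smul (n := n) (fun u => ENNReal.ofReal (f (ξ + u)))
      (inv_ne_zero hlam.ne')
    rw [h1, lintegral_add_left_eq_self (fun y => ENNReal.ofReal (f y)) ξ]
    congr 2
    rw [inv_pow, inv_inv, abs_of_pos (pow_pos hlam n)]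
  have hne0 : ENNReal.ofReal (lam ^ n) ≠ 0 := by
    simp only [ne_eq, ENNReal.ofReal_eq_zero, not_le]
    positivity
  have hIy : ∫⁻ y, ENNReal.ofReal (f y) =
      (ENNReal.ofReal (lam ^ n))⁻¹ * ∫⁻ z, ENNReal.ofReal (f (ξ + lam⁻¹ • z)) := by
    rw [hscale, ← mul_assoc, ENNReal.inv_mul_cancel hne0 ENNReal.ofReal_ne_top, one_mul]
  -- apply the normalized estimate
  have hbound : ∫⁻ z, ENNReal.ofReal (f (ξ + lam⁻¹ • z)) ≤
      ENNReal.ofReal (lam ^ ((n : ℝ) + μ / 2)) *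
        (C0 * ENNReal.ofReal ((1 + ‖w‖ ^ 2) ^ (-(μ / 2)))) := by
    calc ∫⁻ z, ENNReal.ofReal (f (ξ + lam⁻¹ • z))
        = ∫⁻ z, ENNReal.ofReal (lam ^ ((n : ℝ) + μ / 2)) *
            (ENNReal.ofReal (‖w - z‖ ^ (-μ)) *
              ENNReal.ofReal ((1 + ‖z‖ ^ 2) ^ (-K))) := by simp_rw [hpt]
      _ = ENNReal.ofReal (lam ^ ((n : ℝ) + μ / 2)) *
            ∫⁻ z, ENNReal.ofReal (‖w - z‖ ^ (-μ)) *
              ENNReal.ofReal ((1 + ‖z‖ ^ 2) ^ (-K)) :=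
          lintegral_const_mul' _ _ ENNReal.ofReal_ne_top
      _ ≤ _ := mul_le_mul_right (hC0 w) _
  have hfinal : ∫⁻ y, ENNReal.ofReal (f y) ≤
      C0 * ENNReal.ofReal (lam ^ (μ / 2) *
        (1 + lam ^ 2 * ‖x - ξ‖ ^ 2) ^ (-(μ / 2))) := by
    rw [hIy]
    refine le_trans (mul_le_mul_right hbound _) ?_
    have e5 : lam ^ ((n : ℝ) + μ / 2) = lam ^ n * lam ^ (μ / 2) := by
      rw [Real.rpow_add hlam, Real.rpow_natCast]
    rw [e5, ENNReal.ofReal_mul (by positivity), hw2]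
    refine le_of_eq ?_
    calc (ENNReal.ofReal (lam ^ n))⁻¹ *
          (ENNReal.ofReal (lam ^ n) * ENNReal.ofReal (lam ^ (μ / 2)) *
            (C0 * ENNReal.ofReal ((1 + lam ^ 2 * ‖x - ξ‖ ^ 2) ^ (-(μ / 2)))))
        = ((ENNReal.ofReal (lam ^ n))⁻¹ * ENNReal.ofReal (lam ^ n)) *
            (C0 * (ENNReal.ofReal (lam ^ (μ / 2)) *
              ENNReal.ofReal ((1 + lam ^ 2 * ‖x - ξ‖ ^ 2) ^ (-(μ / 2))))) := by ring
      _ = C0 * (ENNReal.ofReal (lam ^ (μ / 2)) *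
            ENNReal.ofReal ((1 + lam ^ 2 * ‖x - ξ‖ ^ 2) ^ (-(μ / 2)))) := by
          rw [ENNReal.inv_mul_cancel hne0 ENNReal.ofReal_ne_top, one_mul]
      _ = C0 * ENNReal.ofReal (lam ^ (μ / 2) *
            (1 + lam ^ 2 * ‖x - ξ‖ ^ 2) ^ (-(μ / 2))) := by
          rw [ENNReal.ofReal_mul (by positivity)]
  -- convert back to real numbers
  have htop : C0 * ENNReal.ofReal (lam ^ (μ / 2) *
      (1 + lam ^ 2 * ‖x - ξ‖ ^ 2) ^ (-(μ / 2))) ≠ ⊤ :=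
    ENNReal.mul_ne_top hC0top ENNReal.ofReal_ne_top
  have h6 : (∫⁻ y, ENNReal.ofReal (f y)).toReal ≤
      C0.toReal * (lam ^ (μ / 2) * (1 + lam ^ 2 * ‖x - ξ‖ ^ 2) ^ (-(μ / 2))) := by
    have := ENNReal.toReal_mono htop hfinal
    rwa [ENNReal.toReal_mul, ENNReal.toReal_ofReal (by positivity)] at this
  refine h6.trans ?_
  have e7 : lam ^ (μ / 2) * (1 + lam ^ 2 * ‖x - ξ‖ ^ 2) ^ (-(μ / 2)) =
      lam ^ (μ / 2) / (1 + lam ^ 2 * ‖x - ξ‖ ^ 2) ^ (μ / 2) := by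
    rw [Real.rpow_neg (by positivity)]
    exact (div_eq_mul_inv _ _).symm
  rw [e7]
  refine mul_le_mul_of_nonneg_right ?_ (by positivity)
  linarith [ENNReal.toReal_nonneg (a := C0)]
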